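/- Let N ≥ 2 and M be integers with M ≠ 0, let q ∈ ℂ with 0 < |q| < 1, let h be a nonzero integer, and set p = q^{Nh}, assuming 0 < |p| < 1. Define 𝒴_{N,p,q,M}(x) = ∏_{k=1}^{S} [ Θ_{q^{2N}}(x² p^{−k})² Θ_{q^{2N}}(x² q² p^{k}) Θ_{q^{2N}}(x² q^{−2} p^{k}) ] / [ Θ_{q^{2N}}(x² p^{k})² Θ_{q^{2N}}(x² q² p^{−k}) Θ_{q^{2N}}(x² q^{−2} p^{−k}) ], with S = NM for M > 0 and S = N|M| − 1 for M < 0. Then 𝒴_{N,p,q,M}(x) = 1 for every x ∈ ℂ for which all the theta factors are defined and nonzero. -/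

import Mathlib

open Complex

/-!
The theta function satisfies `Θ_t(t z) = -z⁻¹ Θ_t(z)`, hence
`Θ_t(tᵐ u) Θ_t(tᵐ u') = (u u')⁻ᵐ t^(-m(m-1)) Θ_t(u) Θ_t(u')`: the multiplier of a pair of
arguments shifted together depends only on their product. For `t = q^{2N}` and `p = q^{Nh}` we
have `p² = tʰ`, so `pᵏ = t^{hk} p⁻ᵏ`. Writing `u = x²p⁻ᵏ`, `v = x²q²p⁻ᵏ`, `v' = x²q⁻²p⁻ᵏ`, the
numerator of the `k`-th factor of `𝒴` is `Θ(u)² Θ(t^{hk} v) Θ(t^{hk} v')` and its denominator is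
`Θ(t^{hk} u)² Θ(v) Θ(v')`; since `u² = v v'`, the two multipliers agree and every factor is `1`.
-/

/-- The infinite `q`-Pochhammer product `(z;p)_∞ = ∏_{n≥0} (1 − z pⁿ)`. -/
noncomputable def qPoch (z p : ℂ) : ℂ := ∏' n : ℕ, (1 - z * p ^ n)

/-- The Jacobi theta function `Θ_p(z) = (z;p)_∞ (p z⁻¹;p)_∞ (p;p)_∞`. -/
noncomputable def jTheta (p z : ℂ) : ℂ := qPoch z p * qPoch (p * z⁻¹) p * qPoch p p

/-- The exchange structure function `𝒴_{N,p,q,M}(x)` of the trace operators `t(z)`: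
`𝒴(x) = ∏_{k=1}^{S} Θ(x²p^{−k})²Θ(x²q²p^k)Θ(x²q^{−2}p^k) /
(Θ(x²p^k)²Θ(x²q²p^{−k})Θ(x²q^{−2}p^{−k}))` with `S = NM` for `M>0`, `S = N|M|−1` for `M<0`. -/
noncomputable def Yfun (N : ℕ) (M : ℤ) (q p : ℂ) (x : ℂ) : ℂ :=
  ∏ k ∈ Finset.Icc 1 (if 0 < M then N * M.toNat else N * (-M).toNat - 1),
    jTheta (q ^ (2 * N)) (x ^ 2 * p ^ (-(k : ℤ))) ^ 2
      * jTheta (q ^ (2 * N)) (x ^ 2 * q ^ 2 * p ^ (k : ℤ))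
      * jTheta (q ^ (2 * N)) (x ^ 2 * q ^ (-2 : ℤ) * p ^ (k : ℤ))
      / (jTheta (q ^ (2 * N)) (x ^ 2 * p ^ (k : ℤ)) ^ 2
        * jTheta (q ^ (2 * N)) (x ^ 2 * q ^ 2 * p ^ (-(k : ℤ)))
        * jTheta (q ^ (2 * N)) (x ^ 2 * q ^ (-2 : ℤ) * p ^ (-(k : ℤ))))

lemma multipliable_one_sub_mul_pow (z : ℂ) {t : ℂ} (ht : ‖t‖ < 1) :
    Multipliable fun n : ℕ ↦ 1 - z * t ^ n := by
  simp_rw [sub_eq_add_neg]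
  refine multipliable_one_add_of_summable ?_
  simpa only [norm_neg, norm_mul, norm_pow] using
    (summable_geometric_of_lt_one (norm_nonneg t) ht).mul_left ‖z‖

lemma qPoch_eq_one_sub_mul (z : ℂ) {t : ℂ} (ht : ‖t‖ < 1) :
    qPoch z t = (1 - z) * qPoch (z * t) t := by
  have hshift : ∀ n : ℕ, z * t ^ (n + 1) = z * t * t ^ n := fun n ↦ by ring
  have hm : Multipliable fun n : ℕ ↦ 1 - z * t ^ (n + 1) := by
    simpa only [hshift] using multipliable_one_sub_mul_pow (z * t) ht
  rw [qPoch, qPoch, tprod_eq_zero_mul' (f := fun n : ℕ ↦ 1 - z * t ^ n) hm, pow_zero, mul_one]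
  simp only [hshift]

lemma jTheta_mul_self {t : ℂ} (ht : ‖t‖ < 1) (ht0 : t ≠ 0) {w : ℂ} (hw : w ≠ 0) :
    jTheta t (t * w) = -w⁻¹ * jTheta t w := by
  have hinv : t * (t * w)⁻¹ = w⁻¹ := by field_simp
  have hsub : (1 : ℂ) - w⁻¹ = -w⁻¹ * (1 - w) := by field_simp; ring
  rw [jTheta, jTheta, hinv, qPoch_eq_one_sub_mul w ht, qPoch_eq_one_sub_mul w⁻¹ ht, hsub,
    mul_comm t w, mul_comm t w⁻¹]
  ring

lemma jTheta_zpow_mul_mul_jTheta_zpow_mul {t : ℂ} (ht : ‖t‖ < 1) (ht0 : t ≠ 0) {u v : ℂ}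
    (hu : u ≠ 0) (hv : v ≠ 0) (m : ℤ) :
    jTheta t (t ^ m * u) * jTheta t (t ^ m * v)
      = (u * v) ^ (-m) * t ^ (-(m * (m - 1))) * (jTheta t u * jTheta t v) := by
  set L : ℤ → ℂ := fun m ↦ jTheta t (t ^ m * u) * jTheta t (t ^ m * v)
  set R : ℤ → ℂ := fun m ↦ (u * v) ^ (-m) * t ^ (-(m * (m - 1))) * (jTheta t u * jTheta t v)
  -- Passing from `m` to `m + 1` multiplies both sides by the same nonzero factor `c m`.
  set c : ℤ → ℂ := fun m ↦ (t ^ m * u)⁻¹ * (t ^ m * v)⁻¹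
  have hc : ∀ m, c m ≠ 0 := fun m ↦ by simp [c, zpow_ne_zero m ht0, hu, hv]
  have hL : ∀ m, L (m + 1) = c m * L m := fun m ↦ by
    simp only [L, c, zpow_add_one₀ ht0, mul_comm _ t, mul_assoc t,
      jTheta_mul_self ht ht0 (mul_ne_zero (zpow_ne_zero m ht0) hu),
      jTheta_mul_self ht ht0 (mul_ne_zero (zpow_ne_zero m ht0) hv)]
    ring
  have hR : ∀ m, R (m + 1) = c m * R m := fun m ↦ by
    have huv : (u * v) ^ (-(m + 1)) = (u * v) ^ (-m) * u⁻¹ * v⁻¹ := by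
      rw [neg_add, zpow_add₀ (mul_ne_zero hu hv), zpow_neg_one, mul_inv, mul_assoc]
    have htm :
        t ^ (-((m + 1) * (m + 1 - 1))) = t ^ (-(m * (m - 1))) * (t ^ m)⁻¹ * (t ^ m)⁻¹ := by
      rw [← zpow_neg, ← zpow_add₀ ht0, ← zpow_add₀ ht0]; ring_nf
    simp only [R, c, huv, htm, mul_inv]
    ring
  have hstep : ∀ m, L m = R m ↔ L (m + 1) = R (m + 1) := fun m ↦ by
    rw [hL, hR, mul_right_inj' (hc m)]
  show L m = R m
  induction m using Int.induction_on with
  | zero => simp [L, R]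
  | succ m ih => exact (hstep m).mp ih
  | pred m ih => exact (hstep (-m - 1)).mpr (by rwa [sub_add_cancel])

lemma jTheta_pair_zpow_shift_swap {t : ℂ} (ht : ‖t‖ < 1) (ht0 : t ≠ 0) {u u' v v' : ℂ}
    (hu : u ≠ 0) (hu' : u' ≠ 0) (hv : v ≠ 0) (hv' : v' ≠ 0) (huv : u * u' = v * v') (m : ℤ) :
    jTheta t u * jTheta t u' * (jTheta t (t ^ m * v) * jTheta t (t ^ m * v'))
      = jTheta t (t ^ m * u) * jTheta t (t ^ m * u') * (jTheta t v * jTheta t v') := by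
  rw [jTheta_zpow_mul_mul_jTheta_zpow_mul ht ht0 hu hu',
    jTheta_zpow_mul_mul_jTheta_zpow_mul ht ht0 hv hv', huv]
  ring

lemma jTheta_exchange_factor {t p : ℂ} (ht : ‖t‖ < 1) (ht0 : t ≠ 0) {h : ℤ} (hp : p ^ 2 = t ^ h)
    (y : ℂ) {a b : ℂ} (hab : a * b = 1) (k : ℤ) :
    jTheta t (y * p ^ (-k)) ^ 2 * jTheta t (y * a * p ^ k) * jTheta t (y * b * p ^ k)
      = jTheta t (y * p ^ k) ^ 2 * jTheta t (y * a * p ^ (-k)) * jTheta t (y * b * p ^ (-k)) := by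
  rcases eq_or_ne y 0 with rfl | hy
  · simp only [zero_mul]
  have hp0 : p ≠ 0 := by
    rintro rfl
    exact zpow_ne_zero h ht0 (by rw [← hp, zero_pow two_ne_zero])
  have hpk : p ^ k = t ^ (h * k) * p ^ (-k) := by
    rw [zpow_mul, ← hp, ← zpow_natCast, ← zpow_mul, ← zpow_add₀ hp0]
    ring_nf
  have hr : p ^ (-k) ≠ 0 := zpow_ne_zero _ hp0
  have ha : a ≠ 0 := left_ne_zero_of_mul_eq_one hab
  have hb : b ≠ 0 := right_ne_zero_of_mul_eq_one hab
  have key := jTheta_pair_zpow_shift_swap ht ht0 (mul_ne_zero hy hr) (mul_ne_zero hy hr)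
    (mul_ne_zero (mul_ne_zero hy ha) hr) (mul_ne_zero (mul_ne_zero hy hb) hr)
    (by linear_combination (y * p ^ (-k)) ^ 2 * hab.symm) (h * k)
  rw [hpk]
  simp only [mul_left_comm _ (t ^ (h * k))]
  linear_combination key

theorem stmt12_general (N : ℕ) (hN : 2 ≤ N) (M : ℤ) (h : ℤ)
    (q : ℂ) (hq0 : 0 < ‖q‖) (hq1 : ‖q‖ < 1)
    (x : ℂ)
    (hdef : ∀ k ∈ Finset.Icc 1 (if 0 < M then N * M.toNat else N * (-M).toNat - 1),
      jTheta (q ^ (2 * N)) (x ^ 2 * (q ^ ((N : ℤ) * h)) ^ (-(k : ℤ))) ≠ 0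
      ∧ jTheta (q ^ (2 * N)) (x ^ 2 * q ^ 2 * (q ^ ((N : ℤ) * h)) ^ (k : ℤ)) ≠ 0
      ∧ jTheta (q ^ (2 * N)) (x ^ 2 * q ^ (-2 : ℤ) * (q ^ ((N : ℤ) * h)) ^ (k : ℤ)) ≠ 0
      ∧ jTheta (q ^ (2 * N)) (x ^ 2 * (q ^ ((N : ℤ) * h)) ^ (k : ℤ)) ≠ 0
      ∧ jTheta (q ^ (2 * N)) (x ^ 2 * q ^ 2 * (q ^ ((N : ℤ) * h)) ^ (-(k : ℤ))) ≠ 0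
      ∧ jTheta (q ^ (2 * N)) (x ^ 2 * q ^ (-2 : ℤ) * (q ^ ((N : ℤ) * h)) ^ (-(k : ℤ))) ≠ 0) :
    Yfun N M q (q ^ ((N : ℤ) * h)) x = 1 := by
  have hq : q ≠ 0 := norm_pos_iff.mp hq0
  have ht : ‖q ^ (2 * N)‖ < 1 := by
    rw [norm_pow]
    exact pow_lt_one₀ (norm_nonneg q) hq1 (by omega)
  have hp : (q ^ ((N : ℤ) * h)) ^ 2 = (q ^ (2 * N)) ^ h := by
    rw [← zpow_natCast, ← zpow_natCast, ← zpow_mul, ← zpow_mul]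
    push_cast
    ring_nf
  have hq2 : q ^ 2 * q ^ (-2 : ℤ) = 1 := by
    rw [← zpow_natCast, ← zpow_add₀ hq]
    norm_num
  refine Finset.prod_eq_one fun k hk ↦ ?_
  obtain ⟨-, -, -, h₁, h₂, h₃⟩ := hdef k hk
  rw [jTheta_exchange_factor ht (pow_ne_zero _ hq) hp _ hq2]
  exact div_self (mul_ne_zero (mul_ne_zero (pow_ne_zero 2 h₁) h₂) h₃)

/-- When `p = q^{Nh}` with `h` a nonzero integer, the exchange function `𝒴_{N,p,q,M}` is
identically equal to `1` (so that `t(z)` realizes an Abelian subalgebra), at every point `x`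
where all the theta factors are defined and nonzero. -/
theorem stmt12 (N : ℕ) (hN : 2 ≤ N) (M : ℤ) (hM : M ≠ 0) (h : ℤ) (hh : h ≠ 0)
    (q : ℂ) (hq0 : 0 < ‖q‖) (hq1 : ‖q‖ < 1)
    (hp0 : 0 < ‖q ^ ((N : ℤ) * h)‖)
    (hp1 : ‖q ^ ((N : ℤ) * h)‖ < 1)
    (x : ℂ)
    (hdef : ∀ k ∈ Finset.Icc 1 (if 0 < M then N * M.toNat else N * (-M).toNat - 1),
      jTheta (q ^ (2 * N)) (x ^ 2 * (q ^ ((N : ℤ) * h)) ^ (-(k : ℤ))) ≠ 0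
      ∧ jTheta (q ^ (2 * N)) (x ^ 2 * q ^ 2 * (q ^ ((N : ℤ) * h)) ^ (k : ℤ)) ≠ 0
      ∧ jTheta (q ^ (2 * N)) (x ^ 2 * q ^ (-2 : ℤ) * (q ^ ((N : ℤ) * h)) ^ (k : ℤ)) ≠ 0
      ∧ jTheta (q ^ (2 * N)) (x ^ 2 * (q ^ ((N : ℤ) * h)) ^ (k : ℤ)) ≠ 0
      ∧ jTheta (q ^ (2 * N)) (x ^ 2 * q ^ 2 * (q ^ ((N : ℤ) * h)) ^ (-(k : ℤ))) ≠ 0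
      ∧ jTheta (q ^ (2 * N)) (x ^ 2 * q ^ (-2 : ℤ) * (q ^ ((N : ℤ) * h)) ^ (-(k : ℤ))) ≠ 0) :
    Yfun N M q (q ^ ((N : ℤ) * h)) x = 1 :=
  stmt12_general N hN M h q hq0 hq1 x hdef
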